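/- arXiv:1902.02995 — 3 statements merged into one kernel-verified Lean document; each statement's English description precedes it below -/
import Mathlib

section
/- There exists a constant C > 0 such that for all real x ≥ 1, the L²(0,1)-norm of B_x satisfies ‖B_x‖₂ ≥ C/√x, where B_x(t) = (1/x)·Σ_{k ≤ x} β(kt). -/
/-!
For `0 ≤ t ≤ 1/(4x)` every `k t` with `k ≤ x` lies in `[0, 1/4]`, so every summand `β(k t)` is at
most `-1/4`; since `⌊x⌋ ≥ x/2` for `x ≥ 1`, this gives `B_x ≤ -1/8` on an interval of length
`1/(4x)`. Hence `‖B_x‖₂² ≥ 1/(256 x)`, i.e. `‖B_x‖₂ ≥ 1/(16 √x)`.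
-/

noncomputable def beta (t : ℝ) : ℝ := t - ⌊t⌋ - 1/2

noncomputable def B (x : ℝ) (t : ℝ) : ℝ :=
  (1/x) * ∑ k ∈ Finset.Icc 1 ⌊x⌋₊, beta (k * t)

open Finset MeasureTheory

lemma beta_eq_fract_sub_half (t : ℝ) : beta t = Int.fract t - 1/2 := rfl

lemma abs_beta_le_half (t : ℝ) : |beta t| ≤ 1/2 := by
  rw [beta_eq_fract_sub_half, abs_le]
  constructor <;> linarith [Int.fract_nonneg t, Int.fract_lt_one t]

lemma beta_eq_sub_half_of_mem_Ico {t : ℝ} (ht : t ∈ Set.Ico (0:ℝ) 1) : beta t = t - 1/2 := by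
  simp [beta, Int.floor_eq_zero_iff.mpr ht]

lemma measurable_beta : Measurable beta :=
  measurable_fract.sub_const _

lemma measurable_B (x : ℝ) : Measurable (B x) :=
  measurable_const.mul <| Finset.measurable_sum _ fun _ _ =>
    measurable_beta.comp (measurable_const.mul measurable_id)

lemma abs_B_le_half (x t : ℝ) : |B x t| ≤ 1/2 := by
  have hsum : |∑ k ∈ Icc 1 ⌊x⌋₊, beta (k * t)| ≤ ⌊x⌋₊ * (1/2) :=
    calc |∑ k ∈ Icc 1 ⌊x⌋₊, beta (k * t)|
        ≤ ∑ k ∈ Icc 1 ⌊x⌋₊, |beta (k * t)| := abs_sum_le_sum_abs _ _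
      _ ≤ ∑ _k ∈ Icc 1 ⌊x⌋₊, (1/2 : ℝ) := sum_le_sum fun k _ => abs_beta_le_half _
      _ = ⌊x⌋₊ * (1/2) := by simp
  have hscale : |1/x| * ⌊x⌋₊ ≤ 1 := by
    rcases le_or_gt x 0 with hx | hx
    · simp [Nat.floor_of_nonpos hx]
    · rw [abs_of_pos (one_div_pos.mpr hx), one_div_mul_eq_div, div_le_one hx]
      exact Nat.floor_le hx.le
  calc |B x t| = |1/x| * |∑ k ∈ Icc 1 ⌊x⌋₊, beta (k * t)| := abs_mul _ _
    _ ≤ |1/x| * (⌊x⌋₊ * (1/2)) := mul_le_mul_of_nonneg_left hsum (abs_nonneg _)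
    _ ≤ 1/2 := by nlinarith

lemma intervalIntegrable_B_sq (x a b : ℝ) : IntervalIntegrable (fun t => B x t ^ 2) volume a b := by
  rw [intervalIntegrable_iff]
  refine Measure.integrableOn_of_bounded (M := 1/4) measure_Ioc_lt_top.ne
    ((measurable_B x).pow_const 2).aestronglyMeasurable (ae_of_all _ fun t => ?_)
  rw [Real.norm_eq_abs, abs_pow]
  nlinarith [abs_B_le_half x t, abs_nonneg (B x t)]

lemma B_le_neg_one_eighth {x t : ℝ} (hx : 1 ≤ x) (ht : t ∈ Set.Icc 0 (1/(4*x))) : B x t ≤ -1/8 := by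
  have hx0 : 0 < x := by linarith
  have hterm : ∀ k ∈ Icc 1 ⌊x⌋₊, beta (k * t) ≤ -1/4 := by
    intro k hk
    have hkx : (k : ℝ) ≤ x := (Nat.le_floor_iff hx0.le).mp (mem_Icc.mp hk).2
    have hkt : (k : ℝ) * t ≤ 1/4 :=
      calc (k : ℝ) * t ≤ x * (1/(4*x)) := mul_le_mul hkx ht.2 ht.1 hx0.le
        _ = 1/4 := by field_simp
    rw [beta_eq_sub_half_of_mem_Ico ⟨by positivity [ht.1], by linarith⟩]
    linarith
  have hsum : ∑ k ∈ Icc 1 ⌊x⌋₊, beta (k * t) ≤ -(⌊x⌋₊ / 4 : ℝ) :=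
    calc ∑ k ∈ Icc 1 ⌊x⌋₊, beta (k * t)
        ≤ ∑ _k ∈ Icc 1 ⌊x⌋₊, (-1/4 : ℝ) := sum_le_sum hterm
      _ = -(⌊x⌋₊ / 4 : ℝ) := by
          simp only [sum_const, Nat.card_Icc, add_tsub_cancel_right, nsmul_eq_mul]; ring
  have hfloor : x / 2 ≤ ⌊x⌋₊ := by
    have : (1 : ℝ) ≤ ⌊x⌋₊ := by exact_mod_cast Nat.one_le_floor_iff x |>.mpr hx
    linarith [Nat.lt_floor_add_one x]
  calc B x t ≤ (1/x) * -(⌊x⌋₊ / 4 : ℝ) := mul_le_mul_of_nonneg_left hsum (by positivity)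
    _ ≤ (1/x) * -(x / 8) := mul_le_mul_of_nonneg_left (by linarith) (by positivity)
    _ = -1/8 := by field_simp

lemma mul_le_intervalIntegral_of_le_on_Icc {f : ℝ → ℝ} {a b c m : ℝ} (hab : a ≤ b) (hbc : b ≤ c)
    (hf : IntervalIntegrable f volume a c) (hm : ∀ t ∈ Set.Icc a b, m ≤ f t)
    (hf0 : ∀ t ∈ Set.Icc b c, 0 ≤ f t) : (b - a) * m ≤ ∫ t in a..c, f t := by
  have hfab : IntervalIntegrable f volume a b :=
    hf.mono_set (Set.uIcc_subset_uIcc_left (Set.mem_uIcc_of_le hab hbc))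
  have hfbc : IntervalIntegrable f volume b c :=
    hf.mono_set (Set.uIcc_subset_uIcc_right (Set.mem_uIcc_of_le hab hbc))
  rw [← intervalIntegral.integral_add_adjacent_intervals hfab hfbc]
  have hleft : (b - a) * m ≤ ∫ t in a..b, f t := by
    simpa [mul_comm] using
      intervalIntegral.integral_mono_on hab intervalIntegrable_const hfab hm
  linarith [intervalIntegral.integral_nonneg (μ := volume) hbc hf0]

lemma one_div_le_integral_B_sq {x : ℝ} (hx : 1 ≤ x) :
    1 / (256 * x) ≤ ∫ t in (0:ℝ)..1, B x t ^ 2 := by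
  have hx0 : 0 < x := by linarith
  have hlen : 1 / (4 * x) ≤ 1 := by rw [div_le_one (by positivity)]; linarith
  have key := mul_le_intervalIntegral_of_le_on_Icc (m := 1/64) (by positivity) hlen
    (intervalIntegrable_B_sq x 0 1)
    (fun t ht => by nlinarith [B_le_neg_one_eighth hx ht]) (fun t _ => sq_nonneg _)
  convert key using 1
  field_simp
  ring

theorem stmt_1 :
    ∃ C : ℝ, 0 < C ∧ ∀ x : ℝ, 1 ≤ x →
      C / Real.sqrt x ≤ (∫ t in (0:ℝ)..1, (B x t)^2) ^ ((1:ℝ)/2) := by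
  refine ⟨1/16, by norm_num, fun x hx => ?_⟩
  have hI := one_div_le_integral_B_sq hx
  have hI0 : 0 ≤ ∫ t in (0:ℝ)..1, B x t ^ 2 := le_trans (by positivity) hI
  rw [← Real.sqrt_eq_rpow, Real.le_sqrt (by positivity) hI0, div_pow, Real.sq_sqrt (by linarith)]
  convert hI using 1
  ring
end

section
/- Let a ∈ ℤ and b ∈ ℕ with b ≥ 1 be relativelyely prime. Then for all real x > 0, |Σ_{1 ≤ m ≤ x} t_{a/b}(m)| ≤ b(b+1), where t_{a/b}(m) = 1 + 2b·β(am/b) and β(t) = t - ⌊t⌋ - 1/2. -/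
open Finset Function

theorem Function.Periodic.sum_Ico_add_eq_sum_range {M : Type*} [AddCommMonoid M] {f : ℕ → M}
    {c : ℕ} (hf : Periodic f c) (n : ℕ) :
    ∑ m ∈ Ico n (n + c), f m = ∑ m ∈ range c, f m := by
  rw [← Nat.image_Ico_mod, sum_image (Nat.mod_injOn_Ico n c)]
  exact sum_congr rfl fun m _ => (hf.map_mod_nat m).symm

theorem Function.Periodic.periodic_sum_range {M : Type*} [AddCommMonoid M] {f : ℕ → M} {c : ℕ}
    (hf : Periodic f c) (h0 : ∑ m ∈ range c, f m = 0) :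
    Periodic (fun N => ∑ m ∈ range N, f m) c := fun N => by
  show ∑ m ∈ range (N + c), f m = _
  rw [← sum_range_add_sum_Ico f (Nat.le_add_right N c), hf.sum_Ico_add_eq_sum_range, h0, add_zero]

theorem Function.Periodic.abs_sum_range_le {f : ℕ → ℝ} {c : ℕ} {B : ℝ} (hf : Periodic f c)
    (hc : 0 < c) (h0 : ∑ m ∈ range c, f m = 0) (hB : ∀ m, |f m| ≤ B) (N : ℕ) :
    |∑ m ∈ range N, f m| ≤ c * B := by
  rw [← (hf.periodic_sum_range h0).map_mod_nat N]
  calc |∑ m ∈ range (N % c), f m| ≤ ∑ m ∈ range (N % c), |f m| := abs_sum_le_sum_abs _ _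
    _ ≤ (N % c : ℕ) * B := (sum_le_card_nsmul _ _ B fun m _ => hB m).trans_eq (by simp)
    _ ≤ c * B := by
      gcongr
      · exact (abs_nonneg _).trans (hB 0)
      · exact (Nat.mod_lt N hc).le

theorem ZMod.sum_range_natCast {M : Type*} [AddCommMonoid M] (n : ℕ) [NeZero n]
    (G : ZMod n → M) : ∑ m ∈ range n, G m = ∑ x, G x :=
  sum_nbij' (↑) ZMod.val (fun _ _ => mem_univ _) (fun x _ => mem_range.2 x.val_lt)
    (fun _ hm => ZMod.val_cast_of_lt (mem_range.1 hm)) (fun x _ => ZMod.natCast_zmod_val x)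
    (fun _ _ => rfl)

theorem ZMod.sum_range_val_unit_mul {M : Type*} [AddCommMonoid M] {n : ℕ} [NeZero n]
    (u : (ZMod n)ˣ) (g : ℕ → M) :
    ∑ m ∈ range n, g (u * m : ZMod n).val = ∑ m ∈ range n, g m := by
  calc ∑ m ∈ range n, g (u * m : ZMod n).val = ∑ x : ZMod n, g (u * x).val :=
        sum_range_natCast n fun x => g (u * x).val
    _ = ∑ x : ZMod n, g x.val := Equiv.sum_comp (Units.mulLeft u) fun x : ZMod n => g x.val
    _ = ∑ m ∈ range n, g m := by
      rw [← sum_range_natCast]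
      exact sum_congr rfl fun m hm => by rw [ZMod.val_cast_of_lt (mem_range.1 hm)]

theorem Int.fract_intCast_mul_div_natCast (a : ℤ) (m b : ℕ) [NeZero b] :
    Int.fract ((a : ℝ) * m / b) = ((a * m : ZMod b).val : ℝ) / b := by
  have hval : (((a * m : ZMod b).val : ℤ) : ℝ) = ((a * m % b : ℤ) : ℝ) := by
    rw [← ZMod.val_intCast]; push_cast; rfl
  push_cast at hval
  rw [hval, ← Int.fract_div_intCast_eq_div_intCast_mod]
  push_cast; rfl

theorem sum_range_fract_mul_div {a : ℤ} {b : ℕ} (hb : 0 < b) (hab : Int.gcd a b = 1) :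
    ∑ m ∈ range b, Int.fract ((a : ℝ) * m / b) = (b - 1) / 2 := by
  have : NeZero b := ⟨hb.ne'⟩
  let u : (ZMod b)ˣ := ZMod.unitOfIsCoprime a (Int.isCoprime_iff_gcd_eq_one.2 hab)
  have hgauss : ∑ m ∈ range b, (m : ℝ) = b * (b - 1) / 2 := by
    have := congrArg (Nat.cast : ℕ → ℝ) (sum_range_id_mul_two b)
    push_cast [Nat.cast_sub hb] at this
    linarith
  calc ∑ m ∈ range b, Int.fract ((a : ℝ) * m / b)
      = ∑ m ∈ range b, ((u * m : ZMod b).val : ℝ) / b := by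
        refine sum_congr rfl fun m _ => ?_
        rw [Int.fract_intCast_mul_div_natCast]; rfl
    _ = (∑ m ∈ range b, (m : ℝ)) / b := by
        rw [ZMod.sum_range_val_unit_mul u fun k => (k : ℝ) / b, sum_div]
    _ = (b - 1) / 2 := by
        rw [hgauss]; field_simp

theorem beta_eq_fract (t : ℝ) : beta t = Int.fract t - 1 / 2 := rfl

noncomputable def tSeq (a : ℤ) (b m : ℕ) : ℝ := 1 + 2 * b * beta (a * m / b)

theorem tSeq_eq_fract (a : ℤ) (b m : ℕ) :
    tSeq a b m = 1 - b + 2 * b * Int.fract ((a : ℝ) * m / b) := by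
  rw [tSeq, beta_eq_fract]; ring

theorem abs_tSeq_le (a : ℤ) (b m : ℕ) : |tSeq a b m| ≤ b + 1 := by
  have h0 := Int.fract_nonneg ((a : ℝ) * m / b)
  have h1 := Int.fract_lt_one ((a : ℝ) * m / b)
  have hb : (0 : ℝ) ≤ b := b.cast_nonneg
  rw [tSeq_eq_fract, abs_le]
  constructor <;> nlinarith

theorem tSeq_periodic (a : ℤ) (b : ℕ) : Periodic (tSeq a b) b := fun m => by
  rcases Nat.eq_zero_or_pos b with rfl | hb
  · rfl
  have hshift : (a : ℝ) * ↑(m + b) / b = a * m / b + a := by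
    push_cast; field_simp
  rw [tSeq_eq_fract, tSeq_eq_fract, hshift, Int.fract_add_intCast]

theorem sum_range_tSeq {a : ℤ} {b : ℕ} (hb : 0 < b) (hab : Int.gcd a b = 1) :
    ∑ m ∈ range b, tSeq a b m = 0 := by
  simp only [tSeq_eq_fract, sum_add_distrib, ← mul_sum, sum_range_fract_mul_div hb hab,
    sum_const, card_range, nsmul_eq_mul]
  ring

theorem abs_sum_Icc_tSeq_le {a : ℤ} {b : ℕ} (hb : 0 < b) (hab : Int.gcd a b = 1) (N : ℕ) :
    |∑ m ∈ Icc 1 N, tSeq a b m| ≤ b * (b + 1) := by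
  have hper := (tSeq_periodic a b).const_add 1
  have h0 : ∑ m ∈ range b, tSeq a b (1 + m) = 0 := by
    rw [← sum_range_tSeq hb hab, ← (tSeq_periodic a b).sum_Ico_add_eq_sum_range 1,
      sum_Ico_eq_sum_range, Nat.add_sub_cancel_left]
  rw [← Ico_add_one_right_eq_Icc, sum_Ico_eq_sum_range, Nat.add_sub_cancel]
  exact hper.abs_sum_range_le hb h0 (fun m => abs_tSeq_le a b _) N

theorem stmt_5_general (a : ℤ) (b : ℕ) (hb : 1 ≤ b) (hab : Int.gcd a b = 1)
    (x : ℝ) :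
    |∑ m ∈ Finset.Icc 1 ⌊x⌋₊, (1 + 2 * (b : ℝ) * beta ((a : ℝ) * m / b))|
      ≤ b * (b + 1) :=
  abs_sum_Icc_tSeq_le hb hab ⌊x⌋₊

theorem stmt_5 (a : ℤ) (b : ℕ) (hb : 1 ≤ b) (hab : Int.gcd a b = 1)
    (x : ℝ) (hx : 0 < x) :
    |∑ m ∈ Finset.Icc 1 ⌊x⌋₊, (1 + 2 * (b : ℝ) * beta ((a : ℝ) * m / b))|
      ≤ b * (b + 1) :=
  stmt_5_general a b hb hab x
end

section
/- Fix ε > 0 and let Θ : [1,∞) → [1,∞) be monotonically increasing with Θ(n) → ∞. For n ∈ ℕ define M̃_n = { t ∈ (0,1) \ ℚ : ϑ_j(t) < 1 + ⌊Θ(n)·j^{1+ε}⌋ for all j ∈ ℕ }, and M̃ = ⋃_{n≥1} M̃_n. Then M̃ has Lebesgue measure 1, i.e., |M̃| = 1. -/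
/-!
The Gauss map `T t = {1/t}` satisfies `ϑ_{j+1}(t) = 1 / T^j(t)` and preserves the measure
`dt / (1 + t)` on `[0, 1]`, whose density lies between `1/2` and `1`. Hence
`|{t : ϑ_{j+1}(t) ≥ (j+1)^{1+ε}}| ≤ 2 (j+1)^{-1-ε}`, which is summable, so by Borel–Cantelli
almost every `t` has `ϑ_j(t) < j^{1+ε}` for all large `j`, hence `ϑ_j(t) ≤ C j^{1+ε}` for all
`j ≥ 1`. Since `Θ(n) → ∞`, some `n` has `Θ(n) ≥ C`, and then `t ∈ M̃_n`.
-/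

open MeasureTheory Filter

/-- Complete quotients: ϑ₀(t) = t, ϑ_{j+1}(t) = 1/(ϑ_j(t) - ⌊ϑ_j(t)⌋). -/
noncomputable def theta : ℕ → ℝ → ℝ
  | 0, t => t
  | (j+1), t => 1 / Int.fract (theta j t)

open Set Topology
open scoped ENNReal Function

lemma Real.log_one_add_inv {u : ℝ} (hu : 0 < u) :
    Real.log (1 + u⁻¹) = Real.log (u + 1) - Real.log u := by
  rw [← Real.log_div (by positivity) hu.ne', add_div, div_self hu.ne', one_div, add_comm]

lemma hasSum_sub_succ_of_monotone {f : ℕ → ℝ} {l : ℝ} (hf : Monotone f)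
    (hl : Tendsto f atTop (𝓝 l)) : HasSum (fun n => f (n + 1) - f n) (l - f 0) := by
  rw [hasSum_iff_tendsto_nat_of_nonneg fun n => sub_nonneg.2 (hf n.le_succ)]
  simpa only [Finset.sum_range_sub] using hl.sub_const (f 0)

lemma integral_inv_one_add {a b : ℝ} (ha : -1 < a) (hab : a ≤ b) :
    ∫ t in a..b, (1 + t)⁻¹ = Real.log (1 + b) - Real.log (1 + a) := by
  rw [intervalIntegral.integral_comp_add_left (fun t => t⁻¹), integral_inv, Real.log_div]
  · linarith
  · linarith
  · rw [uIcc_of_le (by linarith)]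
    exact fun h => by linarith [h.1]

lemma exists_le_mul_of_eventually_le {f g : ℕ → ℝ} (h : ∀ᶠ n in atTop, f n ≤ g n)
    (hg : ∀ n, 1 ≤ g n) : ∃ C, ∀ n, f n ≤ C * g n := by
  obtain ⟨N, hN⟩ := eventually_atTop.1 h
  set C := 1 + ∑ n ∈ Finset.range N, |f n|
  have hC : 1 ≤ C := le_add_of_nonneg_right (Finset.sum_nonneg fun n _ => abs_nonneg _)
  refine ⟨C, fun n => ?_⟩
  rcases lt_or_ge n N with hn | hn
  · calc f n ≤ C := (le_abs_self _).trans <| (Finset.single_le_sum (fun n _ => abs_nonneg (f n))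
          (Finset.mem_range.2 hn)).trans (le_add_of_nonneg_left zero_le_one)
      _ ≤ C * g n := le_mul_of_one_le_right (by linarith) (hg n)
  · exact (hN n hn).trans (le_mul_of_one_le_left (by linarith [hg n]) hC)

noncomputable def gaussMap (t : ℝ) : ℝ := Int.fract t⁻¹

noncomputable def gaussMeasure : Measure ℝ :=
  (volume.restrict (Icc 0 1)).withDensity fun t => ENNReal.ofReal (1 + t)⁻¹

lemma measurable_gaussMap : Measurable gaussMap := measurable_fract.comp measurable_inv

lemma gaussMeasure_apply {s : Set ℝ} (hs : MeasurableSet s) :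
    gaussMeasure s = ∫⁻ t in s ∩ Icc 0 1, ENNReal.ofReal (1 + t)⁻¹ := by
  rw [gaussMeasure, withDensity_apply _ hs, Measure.restrict_restrict hs]

lemma gaussMeasure_inter_Icc {s : Set ℝ} (hs : MeasurableSet s) :
    gaussMeasure (s ∩ Icc 0 1) = gaussMeasure s := by
  rw [gaussMeasure_apply (hs.inter measurableSet_Icc), gaussMeasure_apply hs, inter_assoc,
    inter_self]

lemma gaussMeasure_le : gaussMeasure ≤ volume.restrict (Icc 0 1) := by
  conv_rhs => rw [← withDensity_one (μ := volume.restrict (Icc 0 1))]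
  refine withDensity_mono (ae_restrict_of_forall_mem measurableSet_Icc fun t ht => ?_)
  simpa using inv_le_one_of_one_le₀ (by linarith [ht.1] : (1 : ℝ) ≤ 1 + t)

lemma le_two_smul_gaussMeasure : volume.restrict (Icc 0 1) ≤ (2 : ℝ≥0∞) • gaussMeasure := by
  rw [gaussMeasure, ← withDensity_smul _ (by fun_prop)]
  conv_lhs => rw [← withDensity_one (μ := volume.restrict (Icc 0 1))]
  refine withDensity_mono (ae_restrict_of_forall_mem measurableSet_Icc fun t ht => ?_)
  have h : (2 : ℝ)⁻¹ ≤ (1 + t)⁻¹ := inv_anti₀ (by linarith [ht.1]) (by linarith [ht.2])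
  calc (1 : ℝ≥0∞) = 2 * ENNReal.ofReal 2⁻¹ := by
        rw [ENNReal.ofReal_inv_of_pos two_pos, ENNReal.ofReal_ofNat,
          ENNReal.mul_inv_cancel two_ne_zero ENNReal.ofNat_ne_top]
    _ ≤ 2 * ENNReal.ofReal (1 + t)⁻¹ := by gcongr

lemma gaussMeasure_absolutelyContinuous : gaussMeasure ≪ volume :=
  (withDensity_absolutelyContinuous _ _).trans Measure.restrict_le_self.absolutelyContinuous

lemma gaussMeasure_Ioc {a b : ℝ} (ha : 0 ≤ a) (hab : a ≤ b) (hb : b ≤ 1) :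
    gaussMeasure (Ioc a b) = ENNReal.ofReal (Real.log (1 + b) - Real.log (1 + a)) := by
  have hsub : Ioc a b ⊆ Icc 0 1 := Ioc_subset_Icc_self.trans (Icc_subset_Icc ha hb)
  have hpos : ∀ t ∈ Icc a b, 0 < 1 + t := fun t ht => by linarith [ht.1]
  rw [gaussMeasure_apply measurableSet_Ioc, inter_eq_self_of_subset_left hsub,
    ← ofReal_integral_eq_lintegral_ofReal, ← intervalIntegral.integral_of_le hab,
    integral_inv_one_add (by linarith) hab]
  · exact ((continuousOn_const.add continuousOn_id).inv₀ fun t ht => (hpos t ht).ne')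
      |>.integrableOn_Icc.mono_set Ioc_subset_Icc_self
  · exact ae_restrict_of_forall_mem measurableSet_Ioc fun t ht =>
      (inv_pos.2 (hpos t (Ioc_subset_Icc_self ht))).le

lemma gaussMeasure_Icc_one {x : ℝ} (h0 : 0 ≤ x) (h1 : x ≤ 1) :
    gaussMeasure (Icc x 1) = ENNReal.ofReal (Real.log 2 - Real.log (1 + x)) := by
  rw [← measure_congr (gaussMeasure_absolutelyContinuous.ae_eq Ioc_ae_eq_Icc),
    gaussMeasure_Ioc h0 h1 le_rfl, one_add_one_eq_two]

lemma gaussMeasure_univ : gaussMeasure univ = ENNReal.ofReal (Real.log 2) := by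
  rw [gaussMeasure_apply .univ, univ_inter, ← inter_self (Icc (0 : ℝ) 1),
    ← gaussMeasure_apply measurableSet_Icc, gaussMeasure_Icc_one le_rfl zero_le_one]
  simp

instance : IsFiniteMeasure gaussMeasure :=
  ⟨by rw [gaussMeasure_univ]; exact ENNReal.ofReal_lt_top⟩

lemma gaussMap_preimage_Ici_inter_Icc {x : ℝ} (h0 : 0 < x) :
    gaussMap ⁻¹' Ici x ∩ Icc 0 1 = ⋃ k : ℕ, Ioc ((k + 2 : ℝ)⁻¹) ((k + 1 + x)⁻¹) := by
  ext t
  have gaussMap_eq {k : ℕ} (hk : ⌊t⁻¹⌋ = k + 1) : gaussMap t = t⁻¹ - (k + 1) := by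
    rw [gaussMap, Int.fract, hk]; push_cast; ring
  simp only [mem_iUnion]
  constructor
  · rintro ⟨hx, ht0, ht1⟩
    have htpos : 0 < t := by
      rcases ht0.eq_or_lt with rfl | h
      · rw [mem_preimage, mem_Ici, gaussMap, inv_zero, Int.fract_zero] at hx
        linarith
      · exact h
    have hfloor : (1 : ℤ) ≤ ⌊t⁻¹⌋ := Int.le_floor.2 (by simpa using one_le_inv₀ htpos |>.2 ht1)
    obtain ⟨k, hk⟩ : ∃ k : ℕ, ⌊t⁻¹⌋ = k + 1 := ⟨(⌊t⁻¹⌋ - 1).toNat, by omega⟩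
    have hlt := Int.lt_floor_add_one t⁻¹
    rw [hk] at hlt; push_cast at hlt
    have hx' : x ≤ t⁻¹ - (k + 1) := gaussMap_eq hk ▸ hx
    exact ⟨k, (inv_lt_comm₀ (by positivity) htpos).2 (by linarith),
      (le_inv_comm₀ htpos (by positivity)).2 (by linarith)⟩
  · rintro ⟨k, hl, hr⟩
    have htpos : 0 < t := lt_trans (by positivity) hl
    have hl' : t⁻¹ < k + 2 := (inv_lt_comm₀ (by positivity) htpos).1 hl
    have hr' : k + 1 + x ≤ t⁻¹ := (le_inv_comm₀ htpos (by positivity)).1 hr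
    have hk : ⌊t⁻¹⌋ = k + 1 := Int.floor_eq_iff.2 ⟨by push_cast; linarith, by push_cast; linarith⟩
    refine ⟨?_, htpos.le, hr.trans (inv_le_one_of_one_le₀ (by linarith))⟩
    rw [mem_preimage, mem_Ici, gaussMap_eq hk]
    linarith

lemma pairwise_disjoint_Ioc_inv {x : ℝ} (h0 : 0 ≤ x) :
    Pairwise (Disjoint on fun k : ℕ => Ioc ((k + 2 : ℝ)⁻¹) ((k + 1 + x)⁻¹)) := by
  have ha : Antitone fun k : ℕ => ((k + 1 : ℝ))⁻¹ := fun i j hij =>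
    inv_anti₀ (by positivity) (by gcongr)
  refine ha.pairwise_disjoint_on_Ioc_succ.mono fun i j h => h.mono ?_ ?_ <;>
    exact Ioc_subset_Ioc (le_of_eq (by push_cast [Order.succ_eq_add_one]; ring))
      (inv_anti₀ (by positivity) (by linarith))

lemma log_one_add_inv_sub_nonneg {x : ℝ} (h0 : 0 ≤ x) (h1 : x ≤ 1) (k : ℕ) :
    0 ≤ Real.log (1 + (k + 1 + x)⁻¹) - Real.log (1 + (k + 2 : ℝ)⁻¹) := by
  have hinv : ((k : ℝ) + 2)⁻¹ ≤ ((k : ℝ) + 1 + x)⁻¹ := inv_anti₀ (by positivity) (by linarith)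
  exact sub_nonneg.2 (Real.log_le_log (by positivity) (by linarith))

lemma hasSum_log_one_add_inv_sub {x : ℝ} (h0 : 0 ≤ x) (h1 : x ≤ 1) :
    HasSum (fun k : ℕ => Real.log (1 + (k + 1 + x)⁻¹) - Real.log (1 + (k + 2 : ℝ)⁻¹))
      (Real.log 2 - Real.log (1 + x)) := by
  set f : ℕ → ℝ := fun k => Real.log (k + 1 + x) - Real.log (k + 2)
  have hterm (k : ℕ) : Real.log (1 + (k + 1 + x : ℝ)⁻¹) - Real.log (1 + (k + 2 : ℝ)⁻¹)
      = f (k + 1) - f k := by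
    simp only [f, Real.log_one_add_inv (by positivity : (0 : ℝ) < k + 1 + x),
      Real.log_one_add_inv (by positivity : (0 : ℝ) < k + 2)]
    push_cast; ring_nf
  have hmono : Monotone f := monotone_nat_of_le_succ fun k => by
    rw [← sub_nonneg, ← hterm]
    exact log_one_add_inv_sub_nonneg h0 h1 k
  have hlim : Tendsto f atTop (𝓝 0) := by
    have h := ((Real.tendsto_log_comp_add_sub_log (1 + x)).sub
      (Real.tendsto_log_comp_add_sub_log 2)).comp tendsto_natCast_atTop_atTop
    rw [sub_zero] at h
    refine h.congr fun k => ?_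
    simp only [f, Function.comp_apply]
    ring_nf
  convert hasSum_sub_succ_of_monotone hmono hlim using 1
  · exact funext hterm
  · norm_num [f]

lemma gaussMeasure_gaussMap_preimage_Ici {x : ℝ} (h0 : 0 < x) (h1 : x ≤ 1) :
    gaussMeasure (gaussMap ⁻¹' Ici x) = ENNReal.ofReal (Real.log 2 - Real.log (1 + x)) := by
  have hsum := hasSum_log_one_add_inv_sub h0.le h1
  rw [← gaussMeasure_inter_Icc (measurable_gaussMap measurableSet_Ici),
    gaussMap_preimage_Ici_inter_Icc h0,
    measure_iUnion (pairwise_disjoint_Ioc_inv h0.le) fun _ => measurableSet_Ioc,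
    ← hsum.tsum_eq, ENNReal.ofReal_tsum_of_nonneg (log_one_add_inv_sub_nonneg h0.le h1)
      hsum.summable]
  refine tsum_congr fun k => gaussMeasure_Ioc (by positivity) ?_ ?_
  · exact inv_anti₀ (by positivity) (by linarith)
  · exact inv_le_one_of_one_le₀ (by linarith)

lemma measurePreserving_gaussMap : MeasurePreserving gaussMap gaussMeasure gaussMeasure := by
  refine ⟨measurable_gaussMap, Measure.ext_of_Ici _ _ fun x => ?_⟩
  rw [Measure.map_apply measurable_gaussMap measurableSet_Ici,
    ← gaussMeasure_inter_Icc measurableSet_Ici]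
  rcases le_or_gt x 0 with hx0 | hx0
  · have hpre : gaussMap ⁻¹' Ici x = univ :=
      eq_univ_of_forall fun t => hx0.trans (Int.fract_nonneg _)
    have hIcc : Ici x ∩ Icc 0 1 = Icc 0 1 := inter_eq_right.2 fun t ht => hx0.trans ht.1
    rw [hpre, hIcc, ← gaussMeasure_inter_Icc .univ, univ_inter]
  have hIcc : Ici x ∩ Icc 0 1 = Icc x 1 := by
    ext t
    simp only [mem_inter_iff, mem_Ici, mem_Icc]
    exact ⟨fun h => ⟨h.1, h.2.2⟩, fun h => ⟨h.1, hx0.le.trans h.1, h.2⟩⟩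
  rw [hIcc]
  rcases le_or_gt x 1 with hx1 | hx1
  · rw [gaussMeasure_gaussMap_preimage_Ici hx0 hx1, gaussMeasure_Icc_one hx0.le hx1]
  · have hpre : gaussMap ⁻¹' Ici x = ∅ :=
      eq_empty_of_forall_notMem fun t ht => (Int.fract_lt_one _).not_ge (hx1.le.trans ht)
    rw [hpre, Icc_eq_empty hx1.not_ge, measure_empty]

lemma fract_theta {t : ℝ} (ht : t ∈ Ico 0 1) (j : ℕ) : Int.fract (theta j t) = gaussMap^[j] t := by
  induction j with
  | zero => exact Int.fract_eq_self.2 ht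
  | succ j ih => rw [Function.iterate_succ_apply', ← ih, theta, one_div, gaussMap]

lemma theta_succ_eq_inv {t : ℝ} (ht : t ∈ Ico 0 1) (j : ℕ) :
    theta (j + 1) t = (gaussMap^[j] t)⁻¹ := by
  rw [theta, one_div, fract_theta ht]

lemma volume_Icc_inter_preimage_iterate_Iic_le (c : ℝ) (j : ℕ) :
    volume (Icc 0 1 ∩ (gaussMap^[j]) ⁻¹' Iic c) ≤ 2 * ENNReal.ofReal c := by
  have hmeas : MeasurableSet ((gaussMap^[j]) ⁻¹' Iic c) :=
    measurable_gaussMap.iterate j measurableSet_Iic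
  calc volume (Icc 0 1 ∩ (gaussMap^[j]) ⁻¹' Iic c)
      = volume.restrict (Icc 0 1) ((gaussMap^[j]) ⁻¹' Iic c) := by
        rw [Measure.restrict_apply hmeas, inter_comm]
    _ ≤ 2 * gaussMeasure ((gaussMap^[j]) ⁻¹' Iic c) := le_two_smul_gaussMeasure _
    _ = 2 * gaussMeasure (Iic c) := by
        rw [(measurePreserving_gaussMap.iterate j).measure_preimage
          measurableSet_Iic.nullMeasurableSet]
    _ ≤ 2 * volume.restrict (Icc 0 1) (Iic c) := mul_le_mul_right (gaussMeasure_le _) 2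
    _ ≤ 2 * volume (Icc 0 c) := by
        gcongr 2 * ?_
        rw [Measure.restrict_apply measurableSet_Iic]
        exact measure_mono fun t ht => ⟨ht.2.1, ht.1⟩
    _ = 2 * ENNReal.ofReal c := by rw [Real.volume_Icc, sub_zero]

lemma volume_setOf_le_theta_succ_le {a : ℝ} (ha : 0 < a) (j : ℕ) :
    volume {t ∈ Ioo (0 : ℝ) 1 | a ≤ theta (j + 1) t} ≤ 2 * ENNReal.ofReal a⁻¹ := by
  refine (measure_mono ?_).trans (volume_Icc_inter_preimage_iterate_Iic_le a⁻¹ j)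
  rintro t ⟨ht, hat⟩
  refine ⟨Ioo_subset_Icc_self ht, ?_⟩
  rw [theta_succ_eq_inv (Ioo_subset_Ico_self ht)] at hat
  exact (le_inv_comm₀ ha (inv_pos.1 (ha.trans_le hat))).1 hat

lemma ae_eventually_theta_succ_lt {ε : ℝ} (hε : 0 < ε) :
    ∀ᵐ t, t ∈ Ioo (0 : ℝ) 1 →
      ∀ᶠ j : ℕ in atTop, theta (j + 1) t < ((j + 1 : ℕ) : ℝ) ^ (1 + ε) := by
  set B : ℕ → Set ℝ := fun j => {t ∈ Ioo 0 1 | ((j + 1 : ℕ) : ℝ) ^ (1 + ε) ≤ theta (j + 1) t}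
  have hsum : Summable fun j : ℕ => (((j + 1 : ℕ) : ℝ) ^ (1 + ε))⁻¹ :=
    (summable_nat_add_iff 1).2 (Real.summable_nat_rpow_inv.2 (by linarith))
  have hB : ∑' j, volume (B j) ≠ ∞ := by
    refine ne_top_of_le_ne_top ?_
      (ENNReal.tsum_le_tsum fun j => volume_setOf_le_theta_succ_le (by positivity) j)
    rw [ENNReal.tsum_mul_left]
    exact ENNReal.mul_ne_top ENNReal.ofNat_ne_top hsum.tsum_ofReal_ne_top
  filter_upwards [ae_eventually_notMem hB] with t ht hIoo
  filter_upwards [ht] with j hj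
  exact lt_of_not_ge fun h => hj ⟨hIoo, h⟩

lemma ae_exists_theta_le_mul_rpow {ε : ℝ} (hε : 0 < ε) :
    ∀ᵐ t, t ∈ Ioo (0 : ℝ) 1 → ∃ C, ∀ j : ℕ, 1 ≤ j → theta j t ≤ C * (j : ℝ) ^ (1 + ε) := by
  filter_upwards [ae_eventually_theta_succ_lt hε] with t hbound ht
  obtain ⟨C, hC⟩ := exists_le_mul_of_eventually_le ((hbound ht).mono fun _ => le_of_lt)
    fun n => Real.one_le_rpow (by simp) (by linarith)
  refine ⟨C, fun j hj => ?_⟩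
  obtain ⟨i, rfl⟩ : ∃ i, j = i + 1 := ⟨j - 1, by omega⟩
  exact hC i

theorem stmt_18_general (ε : ℝ) (hε : 0 < ε) (Θ : ℝ → ℝ)
    (hΘtop : Tendsto Θ atTop atTop) :
    volume (⋃ n : ℕ, ⋃ _ : 1 ≤ n,
      {t : ℝ | t ∈ Set.Ioo (0:ℝ) 1 ∧ Irrational t ∧
        ∀ j : ℕ, 1 ≤ j → theta j t < 1 + ⌊Θ n * (j : ℝ) ^ (1 + ε)⌋₊}) = 1 := by
  refine (measure_congr ?_).trans (by simp : volume (Ioo (0 : ℝ) 1) = 1)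
  refine (iUnion₂_subset fun _ _ _ ht => ht.1).eventuallyLE.antisymm ?_
  filter_upwards [ae_exists_theta_le_mul_rpow hε,
    (countable_range ((↑) : ℚ → ℝ)).ae_notMem volume] with t hbound hirr ht
  obtain ⟨C, hC⟩ := hbound ht
  obtain ⟨n, hn, hCn⟩ : ∃ n : ℕ, 1 ≤ n ∧ C ≤ Θ n :=
    ((eventually_ge_atTop 1).and
      ((hΘtop.comp tendsto_natCast_atTop_atTop).eventually_ge_atTop C)).exists
  refine mem_iUnion₂.2 ⟨n, hn, ht, hirr, fun j hj => ?_⟩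
  calc theta j t ≤ C * (j : ℝ) ^ (1 + ε) := hC j hj
    _ ≤ Θ n * (j : ℝ) ^ (1 + ε) := by gcongr
    _ < 1 + ⌊Θ n * (j : ℝ) ^ (1 + ε)⌋₊ := by
      linarith [Nat.lt_floor_add_one (Θ n * (j : ℝ) ^ (1 + ε))]

theorem stmt_18 (ε : ℝ) (hε : 0 < ε) (Θ : ℝ → ℝ)
    (hΘ1 : ∀ x : ℝ, 1 ≤ x → 1 ≤ Θ x)
    (hΘmono : MonotoneOn Θ (Set.Ici (1:ℝ)))
    (hΘtop : Tendsto Θ atTop atTop) :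
    volume (⋃ n : ℕ, ⋃ _ : 1 ≤ n,
      {t : ℝ | t ∈ Set.Ioo (0:ℝ) 1 ∧ Irrational t ∧
        ∀ j : ℕ, 1 ≤ j → theta j t < 1 + ⌊Θ n * (j : ℝ) ^ (1 + ε)⌋₊}) = 1 :=
  stmt_18_general ε hε Θ hΘtop
end
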